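/- arXiv:0802.1654 — 2 statements merged into one kernel-verified Lean document; each statement's English description precedes it below -/
import Mathlib

section
/- Let T : X ⇉ X* be maximal monotone and h ∈ H(T). Then for all (x,v) ∈ X × X*, (x,v) ∈ T if and only if h(x,v) = ⟨x,v⟩. -/
open NormedSpace

def MonotoneSet {X : Type*} [NormedAddCommGroup X] [NormedSpace ℝ X]
    (S : Set (X × StrongDual ℝ X)) : Prop :=
  ∀ p ∈ S, ∀ q ∈ S, 0 ≤ (p.2 - q.2) (p.1 - q.1)

def MaximalMonotoneSet {X : Type*} [NormedAddCommGroup X] [NormedSpace ℝ X]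
    (S : Set (X × StrongDual ℝ X)) : Prop :=
  MonotoneSet S ∧ ∀ S' : Set (X × StrongDual ℝ X), MonotoneSet S' → S ⊆ S' → S' = S

/- If `h p = ⟨p⟩` and `h q = ⟨q⟩`, convexity of `h` at the midpoint `m` of `p` and `q` together with
`⟨m⟩ = (⟨p⟩ + ⟨q⟩)/2 - ⟨p - q⟩/4` forces `⟨p - q⟩ ≥ 0`. Hence every `p` with `h p = ⟨p⟩` is
monotonically related to `T`, and maximality puts it in `T`. -/

section Monotone

variable {X : Type*} [NormedAddCommGroup X] [NormedSpace ℝ X]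

lemma sub_apply_sub_comm (p q : X × StrongDual ℝ X) :
    (p.2 - q.2) (p.1 - q.1) = (q.2 - p.2) (q.1 - p.1) := by
  simp only [sub_apply, map_sub]
  ring

lemma MonotoneSet.insert {S : Set (X × StrongDual ℝ X)} (hS : MonotoneSet S)
    {p : X × StrongDual ℝ X} (hp : ∀ q ∈ S, 0 ≤ (p.2 - q.2) (p.1 - q.1)) :
    MonotoneSet (insert p S) := by
  rintro a (rfl | ha) b (rfl | hb)
  · simp
  · exact hp b hb
  · rw [sub_apply_sub_comm]
    exact hp a ha
  · exact hS a ha b hb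

lemma MaximalMonotoneSet.mem_of_forall_nonneg {S : Set (X × StrongDual ℝ X)}
    (hS : MaximalMonotoneSet S) {p : X × StrongDual ℝ X}
    (hp : ∀ q ∈ S, 0 ≤ (p.2 - q.2) (p.1 - q.1)) : p ∈ S := by
  rw [← hS.2 _ (hS.1.insert hp) (Set.subset_insert p S)]
  exact Set.mem_insert p S

lemma pairing_midpoint (p q : X × StrongDual ℝ X) :
    ((1 / 2 : ℝ) • p + (1 / 2 : ℝ) • q).2 ((1 / 2 : ℝ) • p + (1 / 2 : ℝ) • q).1
      = (p.2 p.1 + q.2 q.1) / 2 - (p.2 - q.2) (p.1 - q.1) / 4 := by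
  simp only [Prod.fst_add, Prod.snd_add, Prod.smul_fst, Prod.smul_snd, add_apply, smul_apply,
    sub_apply, map_add, map_sub, map_smul, smul_eq_mul]
  ring

lemma sub_apply_sub_nonneg_of_eq_pairing {h : X × StrongDual ℝ X → EReal}
    {p q : X × StrongDual ℝ X}
    (hmid : h ((1 / 2 : ℝ) • p + (1 / 2 : ℝ) • q)
      ≤ ((1 / 2 : ℝ) : EReal) * h p + ((1 / 2 : ℝ) : EReal) * h q)
    (hge : ∀ r : X × StrongDual ℝ X, ((r.2 r.1 : ℝ) : EReal) ≤ h r)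
    (hp : h p = ((p.2 p.1 : ℝ) : EReal)) (hq : h q = ((q.2 q.1 : ℝ) : EReal)) :
    0 ≤ (p.2 - q.2) (p.1 - q.1) := by
  have hle := (hge _).trans hmid
  rw [hp, hq, ← EReal.coe_mul, ← EReal.coe_mul, ← EReal.coe_add, EReal.coe_le_coe_iff,
    pairing_midpoint] at hle
  linarith

end Monotone

theorem stmt_6_general {X : Type*} [NormedAddCommGroup X] [NormedSpace ℝ X]
    (S : Set (X × StrongDual ℝ X)) (hS : MaximalMonotoneSet S)
    (h : X × StrongDual ℝ X → EReal)
    (hconv : ∀ p q : X × StrongDual ℝ X, ∀ a b : ℝ, 0 ≤ a → 0 ≤ b → a + b = 1 →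
      h (a • p + b • q) ≤ (a : EReal) * h p + (b : EReal) * h q)
    (hge : ∀ p : X × StrongDual ℝ X, ((p.2 p.1 : ℝ) : EReal) ≤ h p)
    (heq : ∀ p ∈ S, h p = ((p.2 p.1 : ℝ) : EReal)) :
    ∀ p : X × StrongDual ℝ X, p ∈ S ↔ h p = ((p.2 p.1 : ℝ) : EReal) := by
  refine fun p ↦ ⟨heq p, fun hp ↦ hS.mem_of_forall_nonneg fun q hq ↦ ?_⟩
  have hmid := hconv p q (1 / 2) (1 / 2) (by norm_num) (by norm_num) (by norm_num)
  exact sub_apply_sub_nonneg_of_eq_pairing hmid hge hp (heq q hq)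

theorem stmt_6 {X : Type*} [NormedAddCommGroup X] [NormedSpace ℝ X] [CompleteSpace X]
    (S : Set (X × StrongDual ℝ X)) (hS : MaximalMonotoneSet S)
    (h : X × StrongDual ℝ X → EReal)
    (hconv : ∀ p q : X × StrongDual ℝ X, ∀ a b : ℝ, 0 ≤ a → 0 ≤ b → a + b = 1 →
      h (a • p + b • q) ≤ (a : EReal) * h p + (b : EReal) * h q)
    (hlsc : LowerSemicontinuous h)
    (hge : ∀ p : X × StrongDual ℝ X, ((p.2 p.1 : ℝ) : EReal) ≤ h p)
    (heq : ∀ p ∈ S, h p = ((p.2 p.1 : ℝ) : EReal)) :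
    ∀ p : X × StrongDual ℝ X, p ∈ S ↔ h p = ((p.2 p.1 : ℝ) : EReal) :=
  stmt_6_general S hS h hconv hge heq
end

section
/- Let H be a real Hilbert space and h : H × H → ℝ ∪ {+∞} proper convex lsc with h(x,v) ≥ ⟨x,v⟩ and h*(v,x) ≥ ⟨x,v⟩ for all x,v. Then the maximal monotone operator T with graph {(x,v) : h(x,v) = ⟨x,v⟩} is the unique maximal monotone operator S such that h ∈ H(S). -/
open scoped RealInnerProductSpace

noncomputable def hconj {H : Type*} [NormedAddCommGroup H] [InnerProductSpace ℝ H]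
    (h : H × H → EReal) (v x : H) : EReal :=
  ⨆ q : H × H, (((⟪q.1, v⟫ + ⟪x, q.2⟫ : ℝ) : EReal) - h q)

def MonotoneSetH {H : Type*} [NormedAddCommGroup H] [InnerProductSpace ℝ H]
    (S : Set (H × H)) : Prop :=
  ∀ p ∈ S, ∀ q ∈ S, 0 ≤ ⟪p.1 - q.1, p.2 - q.2⟫

def MaximalMonotoneSetH {H : Type*} [NormedAddCommGroup H] [InnerProductSpace ℝ H]
    (S : Set (H × H)) : Prop :=
  MonotoneSetH S ∧ ∀ S' : Set (H × H), MonotoneSetH S' → S ⊆ S' → S' = S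

/-!
Write `π p = ⟪p.1, p.2⟫` and `T = {h = π}`. Since `π ≤ h` and `h` is convex, `π` at a midpoint of
two points of `T` is at most the average of `π`, which is monotonicity of `T`.

For maximality let `e` be monotonically related to `T`; replacing `h` by `(h - π)(· + e) + π`
reduces to `e = 0`. The function `h + ‖·‖² / 2` is at least `‖p.1 + p.2‖² / 2 ≥ 0`, lower
semicontinuous and strongly convex, so it attains its minimum at some `p` of the Hilbert space
`H × H`. There `-p` is a subgradient of `h`, which bounds the conjugate of `h` at `(-p.1, -p.2)`
by `-h p - ‖p‖²`; together with `h* ≥ π` and `h ≥ π` this forces `p.2 = -p.1` and `h p = π p`.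
So `p ∈ T`, and monotonicity against `0` gives `0 ≤ π p = -‖p.1‖²`: `p = 0` and `h 0 = 0`.

Uniqueness is then formal: a maximal monotone `S ⊆ T` equals `T`.
-/

open Filter Topology Set

theorem LowerSemicontinuous.add_coe_of_continuous {X : Type*} [TopologicalSpace X]
    {f : X → EReal} {g : X → ℝ} (hf : LowerSemicontinuous f) (hg : Continuous g) :
    LowerSemicontinuous fun x => f x + (g x : EReal) :=
  hf.add' (continuous_coe_real_ereal.comp hg).lowerSemicontinuous fun _ =>
    EReal.continuousAt_add (.inr (EReal.coe_ne_bot _)) (.inr (EReal.coe_ne_top _))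

theorem Prod.dist_sq_le {α β : Type*} [PseudoMetricSpace α] [PseudoMetricSpace β] (p q : α × β) :
    dist p q ^ 2 ≤ dist p.1 q.1 ^ 2 + dist p.2 q.2 ^ 2 := by
  rw [Prod.dist_eq]
  rcases max_choice (dist p.1 q.1) (dist p.2 q.2) with h | h <;> rw [h]
  · exact le_add_of_nonneg_right (sq_nonneg _)
  · exact le_add_of_nonneg_left (sq_nonneg _)

/-- The midpoint inequality makes every minimizing sequence Cauchy. -/
theorem LowerSemicontinuous.exists_forall_le_of_midpoint {X : Type*} [PseudoMetricSpace X]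
    [CompleteSpace X] {f : X → EReal} (hf : LowerSemicontinuous f)
    (hbdd : ∃ m : ℝ, ∀ x, (m : EReal) ≤ f x) (hne : ∃ x, f x ≠ ⊤) (mid : X → X → X) {c : ℝ}
    (hc : 0 < c) (hmid : ∀ x y (a b : ℝ), f x ≤ a → f y ≤ b →
      f (mid x y) ≤ ((a + b) / 2 - c * dist x y ^ 2 : ℝ)) :
    ∃ x₀, ∀ x, f x₀ ≤ f x := by
  obtain ⟨μ, hμ⟩ : ∃ μ : ℝ, ⨅ x, f x = μ := by
    obtain ⟨m, hm⟩ := hbdd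
    obtain ⟨x, hx⟩ := hne
    refine ⟨(⨅ x, f x).toReal, (EReal.coe_toReal ?_ ?_).symm⟩
    · exact ne_top_of_le_ne_top hx (iInf_le f x)
    · exact ne_bot_of_le_ne_bot (EReal.coe_ne_bot m) (le_iInf hm)
  have hμle : ∀ x, (μ : EReal) ≤ f x := fun x => hμ ▸ iInf_le f x
  set ε : ℕ → ℝ := fun n => 1 / ((n : ℝ) + 1)
  have hε : Tendsto ε atTop (𝓝 0) := tendsto_one_div_add_atTop_nhds_zero_nat
  have hε_anti : Antitone ε := fun m n hmn => by
    simp only [ε]; gcongr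
  obtain ⟨u, hu⟩ : ∃ u : ℕ → X, ∀ n, f (u n) ≤ ((μ + ε n : ℝ) : EReal) := by
    have h : ∀ n, ∃ x, f x < ((μ + ε n : ℝ) : EReal) := fun n =>
      iInf_lt_iff.mp (hμ ▸ EReal.coe_lt_coe_iff.mpr (lt_add_of_pos_right μ (by positivity)))
    choose u hu using h
    exact ⟨u, fun n => (hu n).le⟩
  have hdist : ∀ n k N, N ≤ n → N ≤ k → dist (u n) (u k) ≤ √(ε N / c) := by
    intro n k N hn hk
    have h := (hμle _).trans (hmid _ _ _ _ (hu n) (hu k))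
    rw [EReal.coe_le_coe_iff] at h
    refine Real.le_sqrt_of_sq_le ?_
    rw [le_div_iff₀ hc]
    linarith [hε_anti hn, hε_anti hk]
  obtain ⟨x₀, hx₀⟩ := cauchySeq_tendsto_of_complete (cauchySeq_of_le_tendsto_0 _ hdist
    (by simpa using (hε.div_const c).sqrt))
  refine ⟨x₀, fun x => (?_ : f x₀ ≤ μ).trans (hμle x)⟩
  have hfu : Tendsto (fun n => f (u n)) atTop (𝓝 (μ : EReal)) := by
    refine tendsto_of_tendsto_of_tendsto_of_le_of_le tendsto_const_nhds ?_ (fun n => hμle _) hu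
    have h := (continuous_coe_real_ereal.tendsto _).comp (hε.const_add μ)
    rwa [add_zero] at h
  by_contra! hlt
  obtain ⟨y, hμy, hyf⟩ := exists_between hlt
  obtain ⟨n, hn₁, hn₂⟩ :=
    ((hx₀.eventually (hf x₀ y hyf)).and (hfu.eventually (gt_mem_nhds hμy))).exists
  exact hn₁.not_gt hn₂

theorem le_of_convex_epigraph {E : Type*} [AddCommGroup E] [Module ℝ E] {f : E → EReal}
    (hf : Convex ℝ {x : E × ℝ | f x.1 ≤ x.2}) {p q : E} {r s a b : ℝ} (hp : f p ≤ r)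
    (hq : f q ≤ s) (ha : 0 ≤ a) (hb : 0 ≤ b) (hab : a + b = 1) :
    f (a • p + b • q) ≤ ((a * r + b * s : ℝ) : EReal) :=
  hf (x := (p, r)) (y := (q, s)) hp hq ha hb hab

theorem convex_epigraph_of_le_mul_add_mul {E : Type*} [AddCommGroup E] [Module ℝ E]
    {f : E → EReal}
    (hf : ∀ p q : E, ∀ a b : ℝ, 0 ≤ a → 0 ≤ b → a + b = 1 →
      f (a • p + b • q) ≤ (a : EReal) * f p + (b : EReal) * f q) :
    Convex ℝ {x : E × ℝ | f x.1 ≤ x.2} := by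
  rintro ⟨p, r⟩ (hp : f p ≤ r) ⟨q, s⟩ (hq : f q ≤ s) a b ha hb hab
  show f (a • p + b • q) ≤ ((a * r + b * s : ℝ) : EReal)
  calc f (a • p + b • q) ≤ (a : EReal) * f p + (b : EReal) * f q := hf p q a b ha hb hab
    _ ≤ (a : EReal) * r + (b : EReal) * s := by gcongr
    _ = ((a * r + b * s : ℝ) : EReal) := by norm_cast

section SqNorm

variable {H : Type*} [NormedAddCommGroup H]

-- Not `‖p‖ ^ 2`: the norm of `H × H` is the sup norm.
def sqNorm (p : H × H) : ℝ := ‖p.1‖ ^ 2 + ‖p.2‖ ^ 2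

theorem continuous_sqNorm : Continuous (sqNorm (H := H)) := by
  unfold sqNorm; fun_prop

theorem dist_sq_le_sqNorm_sub (p q : H × H) : dist p q ^ 2 ≤ sqNorm (p - q) := by
  simpa only [sqNorm, dist_eq_norm, Prod.fst_sub, Prod.snd_sub] using Prod.dist_sq_le p q

end SqNorm

section Hilbert

variable {H : Type*} [NormedAddCommGroup H] [InnerProductSpace ℝ H] {h : H × H → EReal}

theorem sqNorm_midpoint (p q : H × H) :
    sqNorm ((1 / 2 : ℝ) • p + (1 / 2 : ℝ) • q) =
      (sqNorm p + sqNorm q) / 2 - sqNorm (p - q) / 4 := by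
  simp only [sqNorm, ← real_inner_self_eq_norm_sq, Prod.fst_add, Prod.snd_add, Prod.smul_fst,
    Prod.smul_snd, Prod.fst_sub, Prod.snd_sub, inner_add_left, inner_add_right, inner_sub_left,
    inner_sub_right, real_inner_smul_left, real_inner_smul_right, real_inner_comm p.1 q.1,
    real_inner_comm p.2 q.2]
  ring

theorem sqNorm_smul_add_smul (p q : H × H) (t : ℝ) :
    sqNorm (t • q + (1 - t) • p) =
      sqNorm p + 2 * t * (⟪p.1, q.1 - p.1⟫ + ⟪p.2, q.2 - p.2⟫) + t ^ 2 * sqNorm (q - p) := by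
  simp only [sqNorm, ← real_inner_self_eq_norm_sq, Prod.fst_add, Prod.snd_add, Prod.smul_fst,
    Prod.smul_snd, Prod.fst_sub, Prod.snd_sub, inner_add_left, inner_add_right, inner_sub_left,
    inner_sub_right, real_inner_smul_left, real_inner_smul_right, real_inner_comm p.1 q.1,
    real_inner_comm p.2 q.2]
  ring

theorem monotoneSetH_setOf_eq_inner (hconv : Convex ℝ {x : (H × H) × ℝ | h x.1 ≤ x.2})
    (hge : ∀ p : H × H, ((⟪p.1, p.2⟫ : ℝ) : EReal) ≤ h p) :
    MonotoneSetH {p : H × H | h p = ((⟪p.1, p.2⟫ : ℝ) : EReal)} := by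
  intro p hp q hq
  have hmid := (hge _).trans (le_of_convex_epigraph hconv hp.le hq.le
    (by norm_num : (0 : ℝ) ≤ 1 / 2) (by norm_num : (0 : ℝ) ≤ 1 / 2) (by norm_num))
  rw [EReal.coe_le_coe_iff] at hmid
  simp only [Prod.fst_add, Prod.snd_add, Prod.smul_fst, Prod.smul_snd, inner_add_left,
    inner_add_right, real_inner_smul_left, real_inner_smul_right] at hmid
  simp only [inner_sub_left, inner_sub_right]
  linarith

noncomputable def addHalfSqNorm (h : H × H → EReal) (p : H × H) : EReal :=
  h p + ((sqNorm p / 2 : ℝ) : EReal)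

theorem addHalfSqNorm_midpoint_le (hconv : Convex ℝ {x : (H × H) × ℝ | h x.1 ≤ x.2})
    {p q : H × H} {a b : ℝ} (hp : addHalfSqNorm h p ≤ a) (hq : addHalfSqNorm h q ≤ b) :
    addHalfSqNorm h ((1 / 2 : ℝ) • p + (1 / 2 : ℝ) • q) ≤
      ((a + b) / 2 - 1 / 8 * dist p q ^ 2 : ℝ) := by
  have hle_sub : ∀ {x : H × H} {c : ℝ}, addHalfSqNorm h x ≤ c →
      h x ≤ ((c - sqNorm x / 2 : ℝ) : EReal) := fun hx => by
    rwa [EReal.coe_sub,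
      EReal.le_sub_iff_add_le (.inl (EReal.coe_ne_bot _)) (.inl (EReal.coe_ne_top _))]
  have hmid := le_of_convex_epigraph hconv (hle_sub hp) (hle_sub hq)
    (by norm_num : (0 : ℝ) ≤ 1 / 2) (by norm_num : (0 : ℝ) ≤ 1 / 2) (by norm_num)
  calc addHalfSqNorm h ((1 / 2 : ℝ) • p + (1 / 2 : ℝ) • q)
      ≤ ((1 / 2 * (a - sqNorm p / 2) + 1 / 2 * (b - sqNorm q / 2)
          + sqNorm ((1 / 2 : ℝ) • p + (1 / 2 : ℝ) • q) / 2 : ℝ) : EReal) := by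
        rw [EReal.coe_add]; exact add_le_add hmid le_rfl
    _ ≤ ((a + b) / 2 - 1 / 8 * dist p q ^ 2 : ℝ) := by
        rw [EReal.coe_le_coe_iff, sqNorm_midpoint]
        linarith [dist_sq_le_sqNorm_sub p q]

theorem addHalfSqNorm_nonneg (hge : ∀ p : H × H, ((⟪p.1, p.2⟫ : ℝ) : EReal) ≤ h p) (p : H × H) :
    0 ≤ addHalfSqNorm h p := by
  have hsq : 0 ≤ ⟪p.1, p.2⟫ + sqNorm p / 2 := by
    have := norm_add_sq_real p.1 p.2
    unfold sqNorm
    nlinarith [sq_nonneg ‖p.1 + p.2‖]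
  calc (0 : EReal) ≤ ((⟪p.1, p.2⟫ + sqNorm p / 2 : ℝ) : EReal) := EReal.coe_nonneg.mpr hsq
    _ ≤ addHalfSqNorm h p := by rw [EReal.coe_add]; exact add_le_add (hge p) le_rfl

/-- `-p` is a subgradient of `h` at a minimizer `p` of `h + ‖·‖² / 2`. -/
theorem le_apply_of_forall_addHalfSqNorm_le (hconv : Convex ℝ {x : (H × H) × ℝ | h x.1 ≤ x.2})
    {p : H × H} {ρ : ℝ} (hρ : h p = ρ) (hmin : ∀ q, addHalfSqNorm h p ≤ addHalfSqNorm h q)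
    (y : H × H) : ((ρ + ⟪p.1, p.1 - y.1⟫ + ⟪p.2, p.2 - y.2⟫ : ℝ) : EReal) ≤ h y := by
  set g := ⟪p.1, y.1 - p.1⟫ + ⟪p.2, y.2 - p.2⟫
  have hbound : ∀ s : ℝ, h y ≤ s → ∀ t ∈ Ioo (0 : ℝ) 1, ρ - g ≤ s + t * (sqNorm (y - p) / 2) := by
    intro s hs t ht
    have hseg := le_of_convex_epigraph hconv hs hρ.le ht.1.le (sub_nonneg.mpr ht.2.le)
      (add_sub_cancel t 1)
    have hcmp := (hmin (t • y + (1 - t) • p)).trans (add_le_add hseg le_rfl)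
    rw [addHalfSqNorm, hρ, ← EReal.coe_add, ← EReal.coe_add, EReal.coe_le_coe_iff,
      sqNorm_smul_add_smul] at hcmp
    have : t * (ρ - g) ≤ t * (s + t * (sqNorm (y - p) / 2)) := by linarith
    exact le_of_mul_le_mul_left this ht.1
  have hlim : ∀ s : ℝ, h y ≤ s → ρ - g ≤ s := fun s hs => by
    have hcont : Tendsto (fun t : ℝ => s + t * (sqNorm (y - p) / 2)) (𝓝[>] 0) (𝓝 s) := by
      have : Tendsto (fun t : ℝ => s + t * (sqNorm (y - p) / 2)) (𝓝 0)
          (𝓝 (s + 0 * (sqNorm (y - p) / 2))) :=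
        (continuous_const.add (continuous_id.mul continuous_const)).tendsto 0
      rw [zero_mul, add_zero] at this
      exact tendsto_nhdsWithin_of_tendsto_nhds this
    exact ge_of_tendsto hcont (Filter.mem_of_superset (Ioo_mem_nhdsGT one_pos) (hbound s hs))
  by_contra! hlt
  obtain ⟨s, hys, hsρ⟩ := EReal.lt_iff_exists_real_btwn.mp hlt
  have := hlim s hys.le
  rw [EReal.coe_lt_coe_iff] at hsρ
  simp only [g, inner_sub_right] at this hsρ
  linarith

theorem add_inner_add_sq_le_zero (hgestar : ∀ x v : H, ((⟪x, v⟫ : ℝ) : EReal) ≤ hconj h v x)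
    {p : H × H} {ρ : ℝ}
    (hsub : ∀ y : H × H, ((ρ + ⟪p.1, p.1 - y.1⟫ + ⟪p.2, p.2 - y.2⟫ : ℝ) : EReal) ≤ h y) :
    ρ + ⟪p.1, p.2⟫ + ‖p.1‖ ^ 2 + ‖p.2‖ ^ 2 ≤ 0 := by
  have hconj_le : hconj h (-p.1) (-p.2) ≤ ((-ρ - ‖p.1‖ ^ 2 - ‖p.2‖ ^ 2 : ℝ) : EReal) := by
    refine iSup_le fun q => (EReal.sub_le_sub le_rfl (hsub q)).trans_eq ?_
    rw [← EReal.coe_sub, EReal.coe_eq_coe_iff]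
    simp only [inner_neg_left, inner_neg_right, inner_sub_right, real_inner_self_eq_norm_sq,
      real_inner_comm q.1 p.1]
    ring
  have h := (hgestar (-p.2) (-p.1)).trans hconj_le
  rw [EReal.coe_le_coe_iff, inner_neg_neg, real_inner_comm] at h
  linarith

theorem apply_zero_eq_zero_of_forall_inner_nonneg [CompleteSpace H] (hproper : ∃ p : H × H, h p ≠ ⊤)
    (hconv : Convex ℝ {x : (H × H) × ℝ | h x.1 ≤ x.2}) (hlsc : LowerSemicontinuous h)
    (hge : ∀ p : H × H, ((⟪p.1, p.2⟫ : ℝ) : EReal) ≤ h p)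
    (hgestar : ∀ x v : H, ((⟪x, v⟫ : ℝ) : EReal) ≤ hconj h v x)
    (hrel : ∀ p : H × H, h p = ((⟪p.1, p.2⟫ : ℝ) : EReal) → 0 ≤ ⟪p.1, p.2⟫) :
    h 0 = 0 := by
  obtain ⟨p₀, hp₀⟩ := hproper
  obtain ⟨p, hmin⟩ := (hlsc.add_coe_of_continuous
    (continuous_sqNorm.div_const 2)).exists_forall_le_of_midpoint ⟨0, addHalfSqNorm_nonneg hge⟩
    ⟨p₀, EReal.add_ne_top hp₀ (EReal.coe_ne_top _)⟩
    (fun p q => (1 / 2 : ℝ) • p + (1 / 2 : ℝ) • q) (by norm_num : (0 : ℝ) < 1 / 8)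
    (fun _ _ _ _ => addHalfSqNorm_midpoint_le hconv)
  obtain ⟨ρ, hρ⟩ : ∃ ρ : ℝ, h p = ρ := by
    have hp_ne_top : h p ≠ ⊤ := fun htop => by
      have := hmin p₀
      rw [htop, EReal.top_add_coe, top_le_iff] at this
      exact EReal.add_ne_top hp₀ (EReal.coe_ne_top _) this
    exact ⟨(h p).toReal, (EReal.coe_toReal hp_ne_top
      (ne_bot_of_le_ne_bot (EReal.coe_ne_bot _) (hge p))).symm⟩
  have hbound := add_inner_add_sq_le_zero hgestar (le_apply_of_forall_addHalfSqNorm_le hconv hρ hmin)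
  have hρge : ⟪p.1, p.2⟫ ≤ ρ := EReal.coe_le_coe_iff.mp (hρ ▸ hge p)
  have hsum : p.2 = -p.1 := by
    have : ‖p.1 + p.2‖ ^ 2 ≤ 0 := by rw [norm_add_sq_real]; linarith
    rw [eq_neg_iff_add_eq_zero, add_comm, ← norm_eq_zero]
    exact pow_eq_zero_iff (n := 2) two_ne_zero |>.mp (le_antisymm this (sq_nonneg _))
  have hinner : ⟪p.1, p.2⟫ = -‖p.1‖ ^ 2 := by
    rw [hsum, inner_neg_right, real_inner_self_eq_norm_sq]
  have hnorm : ‖p.2‖ = ‖p.1‖ := by rw [hsum, norm_neg]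
  have hρeq : ρ = ⟪p.1, p.2⟫ := by rw [hnorm] at hbound; linarith
  have hp1 : p.1 = 0 := by
    have := hrel p (hρ.trans (by rw [hρeq]))
    rw [← norm_eq_zero]; nlinarith [norm_nonneg p.1]
  have hp : p = 0 := Prod.ext hp1 (by rw [hsum, hp1, neg_zero]; rfl)
  rw [← hp, hρ, hρeq, hp1, inner_zero_left, EReal.coe_zero]

noncomputable def recenter (h : H × H → EReal) (e p : H × H) : EReal :=
  h (p + e) - ((⟪(p + e).1, (p + e).2⟫ - ⟪p.1, p.2⟫ : ℝ) : EReal)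

theorem recenter_apply_zero (e : H × H) :
    recenter h e 0 = h e - ((⟪e.1, e.2⟫ : ℝ) : EReal) := by
  simp [recenter]

theorem recenter_eq_inner_iff {e p : H × H} :
    recenter h e p = ((⟪p.1, p.2⟫ : ℝ) : EReal) ↔
      h (p + e) = ((⟪(p + e).1, (p + e).2⟫ : ℝ) : EReal) := by
  unfold recenter
  induction h (p + e) with
  | bot => simp
  | top => rw [EReal.top_sub_coe]; simp
  | coe y =>
    rw [← EReal.coe_sub, EReal.coe_eq_coe_iff, EReal.coe_eq_coe_iff]
    constructor <;> intro h <;> linarith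

theorem inner_le_recenter (hge : ∀ p : H × H, ((⟪p.1, p.2⟫ : ℝ) : EReal) ≤ h p) (e p : H × H) :
    ((⟪p.1, p.2⟫ : ℝ) : EReal) ≤ recenter h e p := by
  rw [recenter, EReal.le_sub_iff_add_le (.inl (EReal.coe_ne_bot _)) (.inl (EReal.coe_ne_top _)),
    ← EReal.coe_add, add_sub_cancel]
  exact hge _

theorem convex_epigraph_recenter (hconv : Convex ℝ {x : (H × H) × ℝ | h x.1 ≤ x.2})
    (e : H × H) :
    Convex ℝ {x : (H × H) × ℝ | recenter h e x.1 ≤ x.2} := by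
  rintro ⟨p, r⟩ (hp : recenter h e p ≤ r) ⟨q, s⟩ (hq : recenter h e q ≤ s) a b ha hb hab
  show recenter h e (a • p + b • q) ≤ ((a * r + b * s : ℝ) : EReal)
  rw [recenter, EReal.sub_le_iff_le_add (.inl (EReal.coe_ne_bot _)) (.inl (EReal.coe_ne_top _)),
    ← EReal.coe_add] at hp hq ⊢
  have hseg := le_of_convex_epigraph hconv hp hq ha hb hab
  rw [show a • (p + e) + b • (q + e) = a • p + b • q + e by
    rw [smul_add, smul_add, add_add_add_comm, ← add_smul, hab, one_smul]] at hseg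
  refine hseg.trans_eq (congrArg _ ?_)
  simp only [Prod.fst_add, Prod.snd_add, Prod.smul_fst, Prod.smul_snd, inner_add_left,
    inner_add_right, real_inner_smul_left, real_inner_smul_right]
  linear_combination (⟪e.1, e.2⟫) * hab

theorem lowerSemicontinuous_recenter (hlsc : LowerSemicontinuous h) (e : H × H) :
    LowerSemicontinuous (recenter h e) := by
  have := (hlsc.comp (continuous_add_const e)).add_coe_of_continuous
    (g := fun p => -(⟪(p + e).1, (p + e).2⟫ - ⟪p.1, p.2⟫)) (by fun_prop)
  convert this using 2 with p
  rw [recenter, sub_eq_add_neg, EReal.coe_neg]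
  rfl

theorem exists_recenter_ne_top (hproper : ∃ p : H × H, h p ≠ ⊤) (e : H × H) :
    ∃ p : H × H, recenter h e p ≠ ⊤ := by
  obtain ⟨p, hp⟩ := hproper
  refine ⟨p - e, ?_⟩
  rw [recenter, sub_add_cancel, sub_eq_add_neg, ← EReal.coe_neg]
  exact EReal.add_ne_top hp (EReal.coe_ne_top _)

theorem hconj_le_hconj_recenter (e : H × H) (x v : H) :
    hconj h (v + e.2) (x + e.1) ≤
      hconj (recenter h e) v x + ((⟪e.1, v⟫ + ⟪x, e.2⟫ + ⟪e.1, e.2⟫ : ℝ) : EReal) := by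
  refine iSup_le fun r => le_trans (le_of_eq ?_) (add_le_add (le_iSup
    (fun q : H × H => ((⟪q.1, v⟫ + ⟪x, q.2⟫ : ℝ) : EReal) - recenter h e q) (r - e)) le_rfl)
  simp only [recenter, sub_add_cancel]
  induction h r with
  | bot => simp
  | top => rw [EReal.top_sub_coe, EReal.sub_top, EReal.sub_top, EReal.bot_add]
  | coe y =>
    norm_cast
    simp only [Prod.fst_sub, Prod.snd_sub, inner_add_left, inner_add_right, inner_sub_left,
      inner_sub_right]
    ring

theorem inner_le_hconj_recenter (hgestar : ∀ x v : H, ((⟪x, v⟫ : ℝ) : EReal) ≤ hconj h v x)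
    (e : H × H) (x v : H) : ((⟪x, v⟫ : ℝ) : EReal) ≤ hconj (recenter h e) v x := by
  have h := EReal.sub_le_of_le_add
    ((hgestar (x + e.1) (v + e.2)).trans (hconj_le_hconj_recenter e x v))
  rwa [← EReal.coe_sub, show ⟪x + e.1, v + e.2⟫ - (⟪e.1, v⟫ + ⟪x, e.2⟫ + ⟪e.1, e.2⟫) = ⟪x, v⟫ by
    simp only [inner_add_left, inner_add_right]; ring] at h

theorem eq_inner_of_forall_inner_nonneg [CompleteSpace H] (hproper : ∃ p : H × H, h p ≠ ⊤)
    (hconv : Convex ℝ {x : (H × H) × ℝ | h x.1 ≤ x.2}) (hlsc : LowerSemicontinuous h)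
    (hge : ∀ p : H × H, ((⟪p.1, p.2⟫ : ℝ) : EReal) ≤ h p)
    (hgestar : ∀ x v : H, ((⟪x, v⟫ : ℝ) : EReal) ≤ hconj h v x) (e : H × H)
    (hrel : ∀ q : H × H, h q = ((⟪q.1, q.2⟫ : ℝ) : EReal) → 0 ≤ ⟪e.1 - q.1, e.2 - q.2⟫) :
    h e = ((⟪e.1, e.2⟫ : ℝ) : EReal) := by
  have h0 := apply_zero_eq_zero_of_forall_inner_nonneg (exists_recenter_ne_top hproper e)
    (convex_epigraph_recenter hconv e) (lowerSemicontinuous_recenter hlsc e)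
    (inner_le_recenter hge e) (inner_le_hconj_recenter hgestar e) fun q hq => by
      simpa [inner_neg_neg] using hrel _ (recenter_eq_inner_iff.mp hq)
  rw [recenter_apply_zero] at h0
  revert h0
  induction h e with
  | bot => simp
  | top => simp
  | coe y => rw [← EReal.coe_sub, EReal.coe_eq_zero, sub_eq_zero]; exact congrArg _

end Hilbert

theorem stmt_15 {H : Type*} [NormedAddCommGroup H] [InnerProductSpace ℝ H] [CompleteSpace H]
    (h : H × H → EReal)
    (hproper : ∃ p : H × H, h p ≠ ⊤)
    (hconv : ∀ p q : H × H, ∀ a b : ℝ, 0 ≤ a → 0 ≤ b → a + b = 1 →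
      h (a • p + b • q) ≤ (a : EReal) * h p + (b : EReal) * h q)
    (hlsc : LowerSemicontinuous h)
    (hge : ∀ x v : H, ((⟪x, v⟫ : ℝ) : EReal) ≤ h (x, v))
    (hgestar : ∀ x v : H, ((⟪x, v⟫ : ℝ) : EReal) ≤ hconj h v x) :
    MaximalMonotoneSetH {p : H × H | h p = ((⟪p.1, p.2⟫ : ℝ) : EReal)} ∧
      ∀ S : Set (H × H), MaximalMonotoneSetH S →
        (∀ p ∈ S, h p = ((⟪p.1, p.2⟫ : ℝ) : EReal)) →
        S = {p : H × H | h p = ((⟪p.1, p.2⟫ : ℝ) : EReal)} := by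
  have hepi := convex_epigraph_of_le_mul_add_mul hconv
  have hge' : ∀ p : H × H, ((⟪p.1, p.2⟫ : ℝ) : EReal) ≤ h p := fun p => hge p.1 p.2
  have hmono := monotoneSetH_setOf_eq_inner hepi hge'
  refine ⟨⟨hmono, fun S hS hsub => hsub.antisymm' fun e he => ?_⟩,
    fun S hS hSG => (hS.2 _ hmono hSG).symm⟩
  exact eq_inner_of_forall_inner_nonneg hproper hepi hlsc hge' hgestar e
    fun q hq => hS e he q (hsub hq)
end
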